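/- Let P_0, P_1, ... be n-by-n row-stochastic matrices with nonnegative entries, and suppose there is m ≥ 0 such that ‖I - P_j‖_∞ ≤ 1/2 for all j ≥ m. Let D_0 = I and D_k = (I - P_{k-1})···(I - P_0) for k ≥ 1. Then for every f ∈ ℝ^n and every ℓ ≥ 0, Σ_{k=0}^{ℓ} ‖D_k f‖_∞ ≤ C · 2^m ‖f‖_∞ for a universal constant C (one may take C = 3). -/
import Mathlib


/-- The ℓ∞ operator norm (maximum absolute row sum) of an `n × n` real matrix. -/
noncomputable def inftyNorm {n : ℕ} (hn : 0 < n) (M : Matrix (Fin n) (Fin n) ℝ) : ℝ :=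
  Finset.univ.sup' (Finset.univ_nonempty_iff.mpr ⟨⟨0, hn⟩⟩) fun i => ∑ j, |M i j|

/-- The residual operators: `D_0 = I`, `D_{k+1} = (I - P_k) D_k`,
so `D_k = (I - P_{k-1}) ⋯ (I - P_0)`. -/
noncomputable def lpD {n : ℕ} (P : ℕ → Matrix (Fin n) (Fin n) ℝ) :
    ℕ → Matrix (Fin n) (Fin n) ℝ
  | 0 => 1
  | (k+1) => (1 - P k) * lpD P k

lemma inftyNorm_nonneg {n : ℕ} (hn : 0 < n) (M : Matrix (Fin n) (Fin n) ℝ) :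
    0 ≤ inftyNorm hn M := by
  have h := Finset.le_sup' (fun i => ∑ j, |M i j|) (Finset.mem_univ (⟨0, hn⟩ : Fin n))
  refine le_trans ?_ h
  exact Finset.sum_nonneg fun j _ => abs_nonneg _

lemma mulVec_bound {n : ℕ} (hn : 0 < n) (M : Matrix (Fin n) (Fin n) ℝ) (c : ℝ)
    (hM : inftyNorm hn M ≤ c) (v : Fin n → ℝ) :
    ‖M.mulVec v‖ ≤ c * ‖v‖ := by
  have hc : 0 ≤ c := le_trans (inftyNorm_nonneg hn M) hM
  rw [pi_norm_le_iff_of_nonneg (mul_nonneg hc (norm_nonneg v))]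
  intro i
  have h1 : ‖M.mulVec v i‖ ≤ ∑ j, |M i j| * ‖v‖ := by
    rw [Real.norm_eq_abs, Matrix.mulVec, dotProduct]
    refine le_trans (Finset.abs_sum_le_sum_abs _ _) (Finset.sum_le_sum fun j _ => ?_)
    rw [abs_mul]
    exact mul_le_mul_of_nonneg_left (norm_le_pi_norm v j) (abs_nonneg _)
  refine le_trans h1 ?_
  rw [← Finset.sum_mul]
  refine mul_le_mul_of_nonneg_right (le_trans ?_ hM) (norm_nonneg v)
  exact Finset.le_sup' (fun i => ∑ j, |M i j|) (Finset.mem_univ i)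

/-- Stability of Laplacian pyramids: if each `P_j` is row-stochastic with nonnegative
entries and `‖I - P_j‖_∞ ≤ 1/2` for `j ≥ m`, then for every `f` and `ℓ`,
`Σ_{k=0}^ℓ ‖D_k f‖_∞ ≤ 3 · 2^m ‖f‖_∞` (sup norm on vectors). -/
theorem stmt7 {n : ℕ} (hn : 0 < n) (P : ℕ → Matrix (Fin n) (Fin n) ℝ)
    (hnn : ∀ k i j, 0 ≤ P k i j) (hrow : ∀ k i, ∑ j, P k i j = 1)
    (m : ℕ) (hcontract : ∀ j ≥ m, inftyNorm hn (1 - P j) ≤ 1 / 2)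
    (f : Fin n → ℝ) (ℓ : ℕ) :
    ∑ k ∈ Finset.range (ℓ + 1), ‖(lpD P k).mulVec f‖ ≤ 3 * 2 ^ m * ‖f‖ := by
  have hf : (0:ℝ) ≤ ‖f‖ := norm_nonneg f
  -- crude bound: inftyNorm (1 - P k) ≤ 2
  have htwo : ∀ k, inftyNorm hn (1 - P k) ≤ 2 := by
    intro k
    refine Finset.sup'_le _ _ fun i _ => ?_
    have : ∀ j, |(1 - P k) i j| ≤ (if i = j then (1:ℝ) else 0) + P k i j := by
      intro j
      have : (1 - P k) i j = (if i = j then (1:ℝ) else 0) - P k i j := by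
        simp [Matrix.sub_apply, Matrix.one_apply]
      rw [this]
      refine le_trans (abs_sub _ _) ?_
      have h1 : |if i = j then (1:ℝ) else 0| = (if i = j then (1:ℝ) else 0) := by
        split <;> simp
      rw [h1, abs_of_nonneg (hnn k i j)]
    calc ∑ j, |(1 - P k) i j| ≤ ∑ j, ((if i = j then (1:ℝ) else 0) + P k i j) :=
          Finset.sum_le_sum fun j _ => this j
      _ = 1 + 1 := by rw [Finset.sum_add_distrib, hrow k i]; simp
      _ = 2 := by norm_num
  -- step: mulVec through product
  have hstep : ∀ k (g : Fin n → ℝ), (lpD P (k+1)).mulVec g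
      = (1 - P k).mulVec ((lpD P k).mulVec g) := by
    intro k g
    rw [lpD, ← Matrix.mulVec_mulVec]
  -- bound 1: ‖D_k f‖ ≤ 2^k ‖f‖
  have hB1 : ∀ k, ‖(lpD P k).mulVec f‖ ≤ 2 ^ k * ‖f‖ := by
    intro k
    induction k with
    | zero => simp [lpD]
    | succ k ih =>
        rw [hstep]
        calc ‖(1 - P k).mulVec ((lpD P k).mulVec f)‖
            ≤ 2 * ‖(lpD P k).mulVec f‖ := mulVec_bound hn _ 2 (htwo k) _
          _ ≤ 2 * (2 ^ k * ‖f‖) := by linarith [ih]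
          _ = 2 ^ (k+1) * ‖f‖ := by ring
  -- bound 2: ‖D_{m+j} f‖ ≤ (1/2)^j * 2^m ‖f‖
  have hB2 : ∀ j, ‖(lpD P (m+j)).mulVec f‖ ≤ (1/2) ^ j * (2 ^ m * ‖f‖) := by
    intro j
    induction j with
    | zero => simpa using hB1 m
    | succ j ih =>
        have heq : m + (j+1) = (m+j) + 1 := by ring
        rw [heq, hstep]
        calc ‖(1 - P (m+j)).mulVec ((lpD P (m+j)).mulVec f)‖
            ≤ (1/2) * ‖(lpD P (m+j)).mulVec f‖ :=
              mulVec_bound hn _ (1/2) (hcontract (m+j) (Nat.le_add_right m j)) _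
          _ ≤ (1/2) * ((1/2) ^ j * (2 ^ m * ‖f‖)) := by
              have h2 : (0:ℝ) ≤ 1/2 := by norm_num
              exact mul_le_mul_of_nonneg_left ih h2
          _ = (1/2) ^ (j+1) * (2 ^ m * ‖f‖) := by ring
  by_cases hlm : ℓ ≤ m
  · calc ∑ k ∈ Finset.range (ℓ + 1), ‖(lpD P k).mulVec f‖
        ≤ ∑ k ∈ Finset.range (ℓ + 1), 2 ^ k * ‖f‖ :=
          Finset.sum_le_sum fun k _ => hB1 k
      _ = (2 ^ (ℓ+1) - 1) * ‖f‖ := by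
          rw [← Finset.sum_mul]
          congr 1
          have := geom_sum_eq (by norm_num : (2:ℝ) ≠ 1) (ℓ+1)
          rw [this]; ring
      _ ≤ 3 * 2 ^ m * ‖f‖ := by
          have h1 : (2:ℝ) ^ (ℓ+1) ≤ 2 ^ (m+1) :=
            pow_le_pow_right₀ (by norm_num) (by omega)
          have h2 : (2:ℝ) ^ (m+1) = 2 * 2 ^ m := by ring
          nlinarith [pow_pos (by norm_num : (0:ℝ) < 2) m]
  · push_neg at hlm
    have hsplit : Finset.range (ℓ+1) = Finset.range (m+1) ∪ Finset.Ico (m+1) (ℓ+1) := by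
      simp only [Finset.range_eq_Ico]
      exact (Finset.Ico_union_Ico_eq_Ico (by omega) (by omega)).symm
    rw [hsplit, Finset.sum_union (by
      simp [Finset.disjoint_left, Finset.mem_range, Finset.mem_Ico]; omega)]
    have hhead : ∑ k ∈ Finset.range (m + 1), ‖(lpD P k).mulVec f‖ ≤ (2 ^ (m+1) - 1) * ‖f‖ := by
      calc ∑ k ∈ Finset.range (m + 1), ‖(lpD P k).mulVec f‖
          ≤ ∑ k ∈ Finset.range (m + 1), 2 ^ k * ‖f‖ := Finset.sum_le_sum fun k _ => hB1 k
        _ = (2 ^ (m+1) - 1) * ‖f‖ := by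
            rw [← Finset.sum_mul]
            congr 1
            have := geom_sum_eq (by norm_num : (2:ℝ) ≠ 1) (m+1)
            rw [this]; ring
    have htail : ∑ k ∈ Finset.Ico (m+1) (ℓ+1), ‖(lpD P k).mulVec f‖ ≤ 2 ^ m * ‖f‖ := by
      have hre : ∑ k ∈ Finset.Ico (m+1) (ℓ+1), ‖(lpD P k).mulVec f‖
          = ∑ j ∈ Finset.range (ℓ - m), ‖(lpD P (m + (j+1))).mulVec f‖ := by
        rw [Finset.sum_Ico_eq_sum_range]
        have : ℓ + 1 - (m + 1) = ℓ - m := by omega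
        rw [this]
        refine Finset.sum_congr rfl fun j _ => ?_
        have h3 : m + 1 + j = m + (j + 1) := by omega
        rw [h3]
      rw [hre]
      calc ∑ j ∈ Finset.range (ℓ - m), ‖(lpD P (m + (j+1))).mulVec f‖
          ≤ ∑ j ∈ Finset.range (ℓ - m), (1/2) ^ (j+1) * (2 ^ m * ‖f‖) :=
            Finset.sum_le_sum fun j _ => hB2 (j+1)
        _ = (∑ j ∈ Finset.range (ℓ - m), (1/2:ℝ) ^ (j+1)) * (2 ^ m * ‖f‖) := by
            rw [← Finset.sum_mul]
        _ ≤ 1 * (2 ^ m * ‖f‖) := by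
            refine mul_le_mul_of_nonneg_right ?_ (by positivity)
            have : ∑ j ∈ Finset.range (ℓ - m), (1/2:ℝ) ^ (j+1)
                = (1/2) * ∑ j ∈ Finset.range (ℓ - m), (1/2:ℝ) ^ j := by
              rw [Finset.mul_sum]; exact Finset.sum_congr rfl fun j _ => by ring
            rw [this]
            have h := sum_geometric_two_le (ℓ - m)
            linarith
        _ = 2 ^ m * ‖f‖ := by ring
    have h2m : (0:ℝ) < 2 ^ m := pow_pos (by norm_num) m
    calc ∑ k ∈ Finset.range (m + 1), ‖(lpD P k).mulVec f‖
          + ∑ k ∈ Finset.Ico (m+1) (ℓ+1), ‖(lpD P k).mulVec f‖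
        ≤ (2 ^ (m+1) - 1) * ‖f‖ + 2 ^ m * ‖f‖ := add_le_add hhead htail
      _ ≤ 3 * 2 ^ m * ‖f‖ := by
          have : (2:ℝ) ^ (m+1) = 2 * 2 ^ m := by ring
          nlinarith
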